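/- arXiv:2402.19223 — 10 statements merged into one kernel-verified Lean document; each statement's English description precedes it below -/
import Mathlib

section
/- A string w is primitive if and only if w occurs exactly twice as a substring in w·w (namely only as a prefix and as a suffix). -/
/-- Strings over the binary alphabet `{a, b}`: `false` is `a`, `true` is `b`. -/
abbrev Word := List Bool

/-- `w` is primitive if it is not of the form `x^j` for any `j ≥ 2`. -/
def Primitive (w : Word) : Prop := ¬ ∃ (x : Word) (j : ℕ), 2 ≤ j ∧ w = (List.replicate j x).flatten

/-- `u` occurs in `w` at (0-indexed) position `i`. -/
def occursAt (u w : Word) (i : ℕ) : Prop :=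
  i + u.length ≤ w.length ∧ (w.drop i).take u.length = u

instance (u w : Word) (i : ℕ) : Decidable (occursAt u w i) := by
  unfold occursAt; infer_instance

/-- Fibonacci words: `F 1 = b`, `F 2 = a`, `F (k+1) = F k ++ F (k-1)`. -/
def F : ℕ → Word
  | 0 => []
  | 1 => [true]
  | 2 => [false]
  | (n+3) => F (n+2) ++ F (n+1)

/-- Fibonacci numbers with `f 1 = f 2 = 1`. -/
def f : ℕ → ℕ
  | 0 => 0
  | 1 => 1
  | (n+2) => f (n+1) + f n

/-- The morphism `φ(a) = aab`, `φ(b) = ab`. -/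
def phi (w : Word) : Word := w.flatMap fun c => if c then [false, true] else [false, false, true]

/-- Lexicographic order on words induced by `a < b` (a proper prefix is smaller). -/
def wlt (x y : Word) : Prop := List.Lex (· < ·) x y

/-- `u` is a border of `w`: a proper substring that is both a prefix and a suffix. -/
def IsBorder (u w : Word) : Prop := u ≠ w ∧ u <+: w ∧ u <:+ w

/-- `w` is a Lyndon word: it is smaller than all of its proper nonempty suffixes. -/
def IsLyndon (w : Word) : Prop := ∀ s : Word, s <:+ w → s ≠ [] → s ≠ w → wlt w s

/-- `fs` is the Lyndon factorization of `w`: a factorization into nonempty Lyndon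
words that is lexicographically non-increasing (powers written as repetitions). -/
def IsLyndonFactorization (w : Word) (fs : List Word) : Prop :=
  fs.flatten = w ∧ (∀ x ∈ fs, IsLyndon x ∧ x ≠ []) ∧ List.Chain' (fun x y => ¬ wlt x y) fs

/-- `ℓ 1 = ab`, `ℓ (k+1) = φ (ℓ k)`. -/
def ell : ℕ → Word
  | 0 => []
  | 1 => [false, true]
  | (n+2) => phi (ell (n+1))

/-! A position `0 < i < |w|` at which `w` occurs in `w ++ w` is a nontrivial rotation fixing
`w`, that is, a factorization `w = u ++ v` with `u ++ v = v ++ u`. By the Lyndon–Schützenberger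
theorem `u` and `v` are then powers of a common word, so `w` is a proper power. Conversely,
`w = x ^ j` with `j ≥ 2` occurs in `w ++ w` at the extra position `|x|`. -/

namespace List

variable {α : Type*}

theorem length_flatten_replicate (x : List α) (k : ℕ) :
    (replicate k x).flatten.length = k * x.length := by
  simp [length_flatten, sum_replicate]

theorem rotate_length_flatten_replicate (x : List α) (j : ℕ) :
    (replicate j x).flatten.rotate x.length = (replicate j x).flatten := by
  cases j with
  | zero => simp
  | succ j =>
    rw [replicate_succ, flatten_cons, rotate_append_length_eq, ← flatten_concat,
      ← replicate_succ', replicate_succ, flatten_cons]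

theorem append_comm_of_append_append_comm {u t : List α} (h : u ++ (u ++ t) = u ++ t ++ u) :
    u ++ t = t ++ u :=
  append_cancel_left (h.trans (append_assoc u t u))

-- The shorter word is a prefix of the longer one and commutes with the remaining suffix.
theorem exists_flatten_replicate_of_append_comm {u v : List α} (h : u ++ v = v ++ u) :
    ∃ (x : List α) (k m : ℕ), u = (replicate k x).flatten ∧ v = (replicate m x).flatten := by
  rcases eq_or_ne u [] with rfl | hu
  · exact ⟨v, 0, 1, by simp, by simp⟩
  rcases eq_or_ne v [] with rfl | hv
  · exact ⟨u, 1, 0, by simp, by simp⟩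
  rcases le_total u.length v.length with hle | hle
  · obtain ⟨t, rfl⟩ : u <+: v :=
      prefix_of_prefix_length_le (prefix_append u v) (h ▸ prefix_append v u) hle
    have : t.length < (u ++ t).length := by simpa [length_pos_iff] using hu
    obtain ⟨x, k, m, rfl, rfl⟩ := exists_flatten_replicate_of_append_comm
      (append_comm_of_append_append_comm h)
    exact ⟨x, k, k + m, rfl, by rw [replicate_add, flatten_append]⟩
  · obtain ⟨t, rfl⟩ : v <+: u :=
      prefix_of_prefix_length_le (prefix_append v u) (h ▸ prefix_append u v) hle
    have : t.length < (v ++ t).length := by simpa [length_pos_iff] using hv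
    obtain ⟨x, k, m, rfl, rfl⟩ := exists_flatten_replicate_of_append_comm
      (append_comm_of_append_append_comm h.symm)
    exact ⟨x, k + m, k, by rw [replicate_add, flatten_append], rfl⟩
termination_by u.length + v.length

end List

open List

theorem occursAt_append_self_iff {w : Word} {i : ℕ} :
    occursAt w (w ++ w) i ↔ i ≤ w.length ∧ w.rotate i = w := by
  unfold occursAt
  rw [length_append, Nat.add_le_add_iff_right]
  refine and_congr_right fun hi => ?_
  rw [rotate_eq_drop_append_take hi, drop_append_of_le_length hi, take_append,
    take_of_length_le (by simp), length_drop, Nat.sub_sub_self hi]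

theorem primitive_iff_rotate_ne_self {w : Word} :
    Primitive w ↔ w ≠ [] ∧ ∀ i, 0 < i → i < w.length → w.rotate i ≠ w := by
  constructor
  · intro hw
    refine ⟨by rintro rfl; exact hw ⟨[], 2, le_rfl, rfl⟩, fun i hi0 hiw hrot => hw ?_⟩
    have hcomm : w.take i ++ w.drop i = w.drop i ++ w.take i := by
      rw [take_append_drop, ← rotate_eq_drop_append_take hiw.le, hrot]
    obtain ⟨x, k, m, hk, hm⟩ := exists_flatten_replicate_of_append_comm hcomm
    have hk0 : k ≠ 0 := by
      rintro rfl
      have := congrArg length hk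
      simp only [length_take, length_flatten_replicate, zero_mul] at this
      omega
    have hm0 : m ≠ 0 := by
      rintro rfl
      have := congrArg length hm
      simp only [length_drop, length_flatten_replicate, zero_mul] at this
      omega
    refine ⟨x, k + m, by omega, ?_⟩
    rw [replicate_add, flatten_append, ← hk, ← hm, take_append_drop]
  · rintro ⟨hw, hrot⟩ ⟨x, j, hj, rfl⟩
    have hx : x ≠ [] := by rintro rfl; simp at hw
    refine hrot x.length (length_pos_iff.mpr hx) ?_ (rotate_length_flatten_replicate x j)
    rw [length_flatten_replicate]
    exact lt_mul_left (length_pos_iff.mpr hx) (by omega)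

theorem filter_occursAt_append_self_eq (w : Word) :
    (Finset.range (2 * w.length + 1)).filter (fun i => occursAt w (w ++ w) i)
      = {0, w.length} ∪ (Finset.Ioo 0 w.length).filter (fun i => w.rotate i = w) := by
  ext i
  simp only [Finset.mem_filter, Finset.mem_range, Finset.mem_union, Finset.mem_insert,
    Finset.mem_singleton, Finset.mem_Ioo, occursAt_append_self_iff]
  constructor
  · rintro ⟨-, hi, hrot⟩
    rcases Nat.eq_zero_or_pos i with rfl | hi0
    · simp
    rcases hi.lt_or_eq with hi | rfl
    · exact Or.inr ⟨⟨hi0, hi⟩, hrot⟩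
    · simp
  · rintro ((rfl | rfl) | ⟨⟨-, hi⟩, hrot⟩)
    · simp
    · exact ⟨by omega, le_rfl, rotate_length w⟩
    · exact ⟨by omega, hi.le, hrot⟩

/-- A string `w` is primitive iff `w` occurs exactly twice in `w ++ w`. -/
theorem stmt0 (w : Word) :
    Primitive w ↔
      ((Finset.range (2 * w.length + 1)).filter (fun i => occursAt w (w ++ w) i)).card = 2 := by
  rw [primitive_iff_rotate_ne_self]
  rcases eq_or_ne w [] with rfl | hw
  · simp only [ne_eq, not_true_eq_false, false_and, false_iff]
    decide
  rw [filter_occursAt_append_self_eq,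
    Finset.card_union_of_disjoint (by simp [Finset.disjoint_left]),
    Finset.card_pair (length_pos_iff.mpr hw).ne, Nat.add_eq_left, Finset.card_eq_zero,
    Finset.filter_eq_empty_iff]
  simp [hw, and_imp]
end

section
/- For every k ≥ 6, F_{k-2} occurs in F_k exactly three times, namely at positions 1, f_{k-2}+1, and f_{k-1}+1 (the last being a suffix occurrence). -/
/-!
A nonempty word `x` occurs in `x ++ x` only trivially unless it is a proper power: an occurrence
at `0 < i < |x|` shows that `x.take i` and `x.drop i` commute, and commuting words are powers of
a common word. Fibonacci words are primitive because their letter counts are consecutive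
Fibonacci numbers, hence coprime. Writing `x = F (k-2)` and `y = F (k-3)`, the word `F k`
factors both as `x x F (k-5) F (k-4)` and as `x y y F (k-4)`; an occurrence of `x` starting in
the first `x` is an occurrence in `x x`, and one starting later yields an occurrence of its
prefix `y` in `y y`.
-/

theorem f_eq_fib : ∀ n, f n = Nat.fib n
  | 0 => rfl
  | 1 => rfl
  | n + 2 => by rw [f, Nat.fib_add_two, f_eq_fib n, f_eq_fib (n + 1), add_comm]

theorem length_F : ∀ n, (F n).length = Nat.fib n
  | 0 => rfl
  | 1 => rfl
  | 2 => rfl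
  | n + 3 => by
    rw [F, List.length_append, length_F (n + 2), length_F (n + 1), Nat.fib_add_two (n := n + 1),
      add_comm]

theorem count_false_F : ∀ n, (F (n + 1)).count false = Nat.fib n
  | 0 => rfl
  | 1 => rfl
  | n + 2 => by
    rw [F, List.count_append, count_false_F (n + 1), count_false_F n, Nat.fib_add_two, add_comm]

theorem count_true_F : ∀ n, (F (n + 2)).count true = Nat.fib n
  | 0 => rfl
  | 1 => rfl
  | n + 2 => by
    rw [F, List.count_append, count_true_F (n + 1), count_true_F n, Nat.fib_add_two, add_comm]

theorem List.exists_eq_flatten_replicate_of_append_comm {α : Type*} {a b : List α}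
    (h : a ++ b = b ++ a) :
    ∃ (t : List α) (m n : ℕ), a = (replicate m t).flatten ∧ b = (replicate n t).flatten := by
  by_cases ha : a = []
  · exact ⟨b, 0, 1, by simp [ha], by simp⟩
  by_cases hb : b = []
  · exact ⟨a, 1, 0, by simp, by simp [hb]⟩
  rcases append_eq_append_iff.mp h with ⟨c, hac, hca⟩ | ⟨c, hbc, hcb⟩
  · obtain ⟨t, m, n, rfl, rfl⟩ := exists_eq_flatten_replicate_of_append_comm (hac.symm.trans hca)
    exact ⟨t, m, m + n, rfl, by rw [hac, replicate_add, flatten_append]⟩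
  · obtain ⟨t, m, n, rfl, rfl⟩ := exists_eq_flatten_replicate_of_append_comm (hbc.symm.trans hcb)
    exact ⟨t, m + n, m, by rw [hbc, replicate_add, flatten_append], rfl⟩
termination_by a.length + b.length
decreasing_by
  · have := length_pos_iff.mpr ha
    simp only [hac, length_append]
    omega
  · have := length_pos_iff.mpr hb
    simp only [hbc, length_append]
    omega

theorem primitive_of_coprime_count {w : Word} (h : (w.count false).Coprime (w.count true)) :
    Primitive w := by
  rintro ⟨t, j, hj, rfl⟩
  simp only [List.count_flatten, List.map_replicate, List.sum_replicate, smul_eq_mul] at h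
  have : j ∣ 1 := h.gcd_eq_one ▸ Nat.dvd_gcd (dvd_mul_right j _) (dvd_mul_right j _)
  have := Nat.le_of_dvd one_pos this
  omega

theorem primitive_F (n : ℕ) : Primitive (F (n + 2)) :=
  primitive_of_coprime_count <| by
    rw [count_false_F, count_true_F]
    exact (Nat.fib_coprime_fib_succ n).symm

section occursAt

variable {u w v : Word} {i : ℕ}

theorem occursAt_of_eq_append {p s : Word} (h : w = p ++ u ++ s) : occursAt u w p.length := by
  subst h
  refine ⟨by simp, ?_⟩
  rw [List.append_assoc, List.drop_left' rfl, List.take_left' rfl]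

theorem occursAt.of_prefix {p : Word} (h : occursAt u w i) (hp : p <+: u) : occursAt p w i := by
  obtain ⟨hlen, htake⟩ := h
  have hpu := hp.length_le
  refine ⟨by omega, ?_⟩
  rw [List.prefix_iff_eq_take.mp hp, ← htake, List.take_take, List.length_take,
    min_eq_left hpu, min_eq_left (by simp; omega)]

theorem occursAt_append_left_iff (h : i + u.length ≤ w.length) :
    occursAt u (w ++ v) i ↔ occursAt u w i := by
  unfold occursAt
  rw [List.drop_append_of_le_length (by omega),
    List.take_append_of_le_length (by rw [List.length_drop]; omega), List.length_append]
  exact and_congr_left fun _ => iff_of_true (by omega) h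

theorem occursAt_append_length_add_iff (j : ℕ) :
    occursAt u (w ++ v) (w.length + j) ↔ occursAt u v j := by
  unfold occursAt
  rw [List.drop_length_add_append, List.length_append]
  exact and_congr_left' (by omega)

end occursAt

theorem Primitive.occursAt_append_self {x : Word} (hx : Primitive x) {i : ℕ}
    (h : occursAt x (x ++ x) i) : i = 0 ∨ i = x.length := by
  by_contra! hi
  have hix : i < x.length := by have := h.1; simp only [List.length_append] at this; omega
  have hrot : x.drop i ++ x.take i = x := by
    have := h.2
    rwa [List.drop_append_of_le_length hix.le, List.take_append, List.take_of_length_le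
      (by simp), List.length_drop, Nat.sub_sub_self hix.le] at this
  obtain ⟨t, m, n, hm, hn⟩ := List.exists_eq_flatten_replicate_of_append_comm
    ((List.take_append_drop i x).trans hrot.symm)
  have hm0 : m ≠ 0 := by
    rintro rfl
    simpa [hi.1, hix.le] using congrArg List.length hm
  have hn0 : n ≠ 0 := by
    rintro rfl
    have := congrArg List.length hn
    simp only [List.length_drop, List.replicate_zero, List.flatten_nil, List.length_nil] at this
    omega
  exact hx ⟨t, m + n, by omega, by
    rw [← List.take_append_drop i x, hm, hn, List.replicate_add, List.flatten_append]⟩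

theorem occursAt_F_add_four_F_add_six_iff (n i : ℕ) :
    occursAt (F (n + 4)) (F (n + 6)) i ↔ i = 0 ∨ i = Nat.fib (n + 4) ∨ i = Nat.fib (n + 5) := by
  set x := F (n + 4) with hx
  set y := F (n + 3) with hy
  have hxx : F (n + 6) = x ++ x ++ (F (n + 1) ++ F (n + 2)) := by
    simp only [hx, F, List.append_assoc]
  have hxyy : F (n + 6) = x ++ (y ++ y ++ F (n + 2)) := by
    simp only [hx, hy, F, List.append_assoc]
  have hlen_x : x.length = Nat.fib (n + 4) := length_F _
  have hlen_y : y.length = Nat.fib (n + 3) := length_F _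
  have hlen_xy : x.length = y.length + (F (n + 2)).length := by
    rw [hx, hy, F, List.length_append]
  have hpx : Primitive x := primitive_F (n + 2)
  have hpy : Primitive y := primitive_F (n + 1)
  have hfib₅ : Nat.fib (n + 5) = Nat.fib (n + 3) + Nat.fib (n + 4) := Nat.fib_add_two
  constructor
  · intro h
    have hlen := h.1
    rw [hxyy] at hlen
    simp only [List.length_append] at hlen
    by_cases hi : i ≤ x.length
    · rw [hxx, occursAt_append_left_iff (by simp; omega)] at h
      rcases hpx.occursAt_append_self h with h0 | h0 <;> omega
    · obtain ⟨j, rfl⟩ : ∃ j, i = x.length + j := ⟨i - x.length, by omega⟩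
      have hy : occursAt y (y ++ y ++ F (n + 2)) j := by
        rw [← occursAt_append_length_add_iff, ← hxyy]
        exact h.of_prefix (by rw [hx, hy, F]; exact List.prefix_append _ _)
      rw [occursAt_append_left_iff (by simp; omega)] at hy
      rcases hpy.occursAt_append_self hy with h0 | h0 <;> omega
  · rintro (rfl | rfl | rfl)
    · exact occursAt_of_eq_append (p := []) (by rw [hxyy]; rfl)
    · rw [← hlen_x]
      exact occursAt_of_eq_append (by rw [hxx, List.append_assoc])
    · rw [← length_F (n + 5)]
      exact occursAt_of_eq_append (s := []) (by rw [List.append_nil]; rfl)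

/-- For `k ≥ 6`, `F (k-2)` occurs in `F k` exactly at (1-indexed) positions
`1`, `f (k-2) + 1` and `f (k-1) + 1` (0-indexed: `0`, `f (k-2)`, `f (k-1)`),
the last being a suffix occurrence. -/
theorem stmt2 (k : ℕ) (hk : 6 ≤ k) :
    (∀ i : ℕ, occursAt (F (k - 2)) (F k) i ↔ i = 0 ∨ i = f (k - 2) ∨ i = f (k - 1)) ∧
      f (k - 1) + f (k - 2) = f k := by
  obtain ⟨n, rfl⟩ : ∃ n, k = n + 6 := ⟨k - 6, by omega⟩
  simp only [show n + 6 - 2 = n + 4 by omega, show n + 6 - 1 = n + 5 by omega, f_eq_fib]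
  exact ⟨occursAt_F_add_four_F_add_six_iff n, (add_comm _ _).trans Nat.fib_add_two.symm⟩
end

section
/- For every k, neither aaa nor bb occurs as a substring of the Fibonacci word F_k. -/
lemma prefix_split {u x y : Word} (h : u <+: x ++ y) :
    u <+: x ∨ ∃ t, u = x ++ t ∧ t <+: y := by
  rcases le_or_gt u.length x.length with hl | hl
  · exact Or.inl ((List.isPrefix_append_of_length hl).1 h)
  · right
    have hx : x <+: u := by
      rcases List.prefix_or_prefix_of_prefix h (List.prefix_append x y) with h1 | h1
      · exact absurd (List.IsPrefix.length_le h1) (by omega)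
      · exact h1
    obtain ⟨t, rfl⟩ := hx
    refine ⟨t, rfl, ?_⟩
    obtain ⟨r, hr⟩ := h
    rw [List.append_assoc] at hr
    exact ⟨r, List.append_cancel_left hr⟩

lemma infix_split {u x y : Word} (h : u <:+: x ++ y) :
    u <:+: x ∨ u <:+: y ∨
      ∃ s t, s ++ t = u ∧ s ≠ [] ∧ t ≠ [] ∧ s <:+ x ∧ t <+: y := by
  induction x with
  | nil => right; left; simpa using h
  | cons a x ih =>
    rw [List.cons_append, List.infix_cons_iff] at h
    rcases h with hp | hi
    · rw [← List.cons_append] at hp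
      rcases prefix_split hp with h1 | ⟨t, rfl, ht⟩
      · exact Or.inl h1.isInfix
      · rcases eq_or_ne t [] with rfl | htne
        · exact Or.inl (by simp)
        · exact Or.inr (Or.inr ⟨a :: x, t, rfl, by simp, htne,
            List.suffix_refl _, ht⟩)
    · rcases ih hi with h1 | h2 | ⟨s, t, h3, h4, h5, h6, h7⟩
      · exact Or.inl (List.infix_cons h1)
      · exact Or.inr (Or.inl h2)
      · exact Or.inr (Or.inr ⟨s, t, h3, h4, h5, h6.trans (List.suffix_cons a x), h7⟩)

lemma suffix_of_length_le {u x y : Word} (h : u <:+ x ++ y)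
    (hl : u.length ≤ y.length) : u <:+ y := by
  rw [← List.reverse_prefix] at h ⊢
  rw [List.reverse_append] at h
  exact (List.isPrefix_append_of_length (by simpa using hl)).1 h

/-- The invariant carried through the induction. -/
def H (k : ℕ) : Prop :=
  ¬ ([false, false, false] <:+: F k) ∧ ¬ ([true, true] <:+: F k) ∧
  ¬ ([false, false] <:+ F k) ∧ ¬ ([false, false] <+: F k) ∧
  ¬ ([true] <+: F k)

lemma F_ne_nil : ∀ n, F (n + 1) ≠ []
  | 0 => by decide
  | 1 => by decide
  | (n+2) => by
    show F (n+2) ++ F (n+1) ≠ []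
    simp [F_ne_nil n]

lemma F_len2 (n : ℕ) : 2 ≤ (F (n + 3)).length := by
  show 2 ≤ (F (n+2) ++ F (n+1)).length
  rw [List.length_append]
  have h1 : F (n+2) ≠ [] := F_ne_nil (n+1)
  have h2 : F (n+1) ≠ [] := F_ne_nil n
  have := List.length_pos_iff.2 h1
  have := List.length_pos_iff.2 h2
  omega

lemma H_step (n : ℕ) (h1 : H (n + 5)) (h2 : H (n + 4)) : H (n + 6) := by
  obtain ⟨a1, a2, a3, a4, a5⟩ := h1
  obtain ⟨b1, b2, b3, b4, b5⟩ := h2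
  have hF : F (n + 6) = F (n + 5) ++ F (n + 4) := rfl
  have hlen : 2 ≤ (F (n + 4)).length := F_len2 (n + 1)
  have hlen5 : 2 ≤ (F (n + 5)).length := F_len2 (n + 2)
  refine ⟨?_, ?_, ?_, ?_, ?_⟩
  · rw [hF]
    intro h
    rcases infix_split h with h | h | ⟨s, t, hst, hs, ht, hsx, hty⟩
    · exact a1 h
    · exact b1 h
    · rcases s with _ | ⟨c1, _ | ⟨c2, _ | ⟨c3, s⟩⟩⟩
      · exact hs rfl
      · -- s = [c1], t = [c2, c3] = [false,false]
        simp only [List.cons_append, List.nil_append, List.cons.injEq] at hst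
        obtain ⟨rfl, htv⟩ := hst
        exact b4 (htv ▸ hty)
      · -- s = [c1,c2], t = [c3]
        simp only [List.cons_append, List.nil_append, List.cons.injEq] at hst
        obtain ⟨rfl, rfl, htv⟩ := hst
        exact a3 hsx
      · -- s has length ≥ 3, so t = []
        simp only [List.cons_append, List.cons.injEq] at hst
        obtain ⟨rfl, rfl, rfl, hrest⟩ := hst
        exact ht (List.append_eq_nil_iff.1 hrest).2
  · rw [hF]
    intro h
    rcases infix_split h with h | h | ⟨s, t, hst, hs, ht, hsx, hty⟩
    · exact a2 h
    · exact b2 h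
    · rcases s with _ | ⟨c1, _ | ⟨c2, s⟩⟩
      · exact hs rfl
      · simp only [List.cons_append, List.nil_append, List.cons.injEq] at hst
        obtain ⟨rfl, htv⟩ := hst
        exact b5 (htv ▸ hty)
      · simp only [List.cons_append, List.cons.injEq] at hst
        obtain ⟨rfl, rfl, hrest⟩ := hst
        exact ht (List.append_eq_nil_iff.1 hrest).2
  · rw [hF]
    intro h
    exact b3 (suffix_of_length_le h (by simpa using hlen))
  · rw [hF]
    intro h
    exact a4 ((List.isPrefix_append_of_length (by simpa using hlen5)).1 h)
  · rw [hF]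
    intro h
    exact a5 ((List.isPrefix_append_of_length (by simp; omega)).1 h)

lemma H_all : ∀ n, H (n + 2)
  | 0 => by unfold H; refine ⟨?_, ?_, ?_, ?_, ?_⟩ <;> decide
  | 1 => by unfold H; refine ⟨?_, ?_, ?_, ?_, ?_⟩ <;> decide
  | 2 => by unfold H; refine ⟨?_, ?_, ?_, ?_, ?_⟩ <;> decide
  | 3 => by unfold H; refine ⟨?_, ?_, ?_, ?_, ?_⟩ <;> decide
  | (n+4) => H_step n (H_all (n+3)) (H_all (n+2))

/-- Neither `aaa` nor `bb` occurs as a substring of any Fibonacci word. -/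
theorem stmt3 (k : ℕ) :
    ¬ ([false, false, false] <:+: F k) ∧ ¬ ([true, true] <:+: F k) := by
  match k with
  | 0 => exact ⟨by decide, by decide⟩
  | 1 => exact ⟨by decide, by decide⟩
  | (n+2) => exact ⟨(H_all n).1, (H_all n).2.1⟩
end

section
/- Every Fibonacci word F_k is primitive. -/
lemma count_flatten_rep (c : Bool) (x : Word) (j : ℕ) :
    ((List.replicate j x).flatten).count c = j * x.count c := by
  induction j with
  | zero => simp
  | succ n ih => simp [List.replicate_succ, List.count_append, ih, Nat.succ_mul, Nat.add_comm]

lemma countA : ∀ n, (F (n+1)).count false = f n := by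
  intro n
  induction n using Nat.strong_induction_on with
  | _ n ih =>
    match n with
    | 0 => simp [F, f]
    | 1 => simp [F, f]
    | (n+2) =>
      have h1 := ih (n+1) (by omega)
      have h2 := ih n (by omega)
      show (F (n+2) ++ F (n+1)).count false = f (n+1) + f n
      simp [List.count_append, h1, h2]

lemma countB : ∀ n, (F (n+2)).count true = f n := by
  intro n
  induction n using Nat.strong_induction_on with
  | _ n ih =>
    match n with
    | 0 => simp [F, f]
    | 1 =>
      show (F 2 ++ F 1).count true = 1
      simp [F]
    | (n+2) =>
      have h1 := ih (n+1) (by omega)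
      have h2 := ih n (by omega)
      show (F (n+3) ++ F (n+2)).count true = f (n+1) + f n
      simp [List.count_append, h1, h2]

lemma fcop : ∀ n, Nat.Coprime (f (n+1)) (f n) := by
  intro n
  induction n with
  | zero => simp [f, Nat.Coprime]
  | succ n ih =>
    show Nat.Coprime (f (n+1) + f n) (f (n+1))
    simpa [Nat.Coprime, Nat.coprime_add_self_left] using ih.symm

/-- Every Fibonacci word is primitive. -/
theorem stmt4 (k : ℕ) (hk : 1 ≤ k) : Primitive (F k) := by
  rintro ⟨x, j, hj, hw⟩
  match k, hk with
  | 1, _ =>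
    have h : (1 : ℕ) = j * x.count true := by
      have := congrArg (List.count true) hw
      simpa [F, count_flatten_rep] using this
    have : j ∣ 1 := ⟨x.count true, h⟩
    have := Nat.le_of_dvd one_pos this
    omega
  | (n+2), _ =>
    have hA : f (n+1) = j * x.count false := by
      have := congrArg (List.count false) hw
      simpa [countA (n+1), count_flatten_rep] using this
    have hB : f n = j * x.count true := by
      have := congrArg (List.count true) hw
      simpa [countB n, count_flatten_rep] using this
    have hdvd : j ∣ Nat.gcd (f (n+1)) (f n) :=
      Nat.dvd_gcd ⟨_, hA⟩ ⟨_, hB⟩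
    rw [fcop n] at hdvd
    have := Nat.le_of_dvd one_pos hdvd
    omega
end

section
/- For every k ≥ 8, F_{k-4} occurs exactly eight times as a substring of F_k. -/
/-!
Write `σ` for the Fibonacci morphism `a ↦ ab, b ↦ a`, so that `σ (F (n+1)) = F (n+2)`, and
`#(u, w)` for the number of occurrences of `u` in `w`. Sorting the occurrences of `u` by the
letter that follows them gives `#(u, w) = #(ua, w) + #(ub, w) + [u is a suffix of w]`. Since `σ`
can be decoded from the left, `#(σ u, σ w) = #(u, w)` whenever `u` ends in `a`.

Fibonacci words contain neither `bb` nor `aaa`, hence no `F m b` with `m ≥ 5`: for odd `m` it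
ends in `bb`, for even `m` it is `σ (x aaa)`. So `#(F (n+5), F (n+9)) = #(F (n+5) a, F (n+9)) + 1`,
and `#(F (n+5) a, F (n+9)) = 7` by induction on `n`: in `F (n+10)`, the word `F (n+6) a` is never
final, and `F (n+6) aa` is never final, never followed by `a` (`aaa`) and never followed by `b`
(`F (n+6) aab = σ (F (n+5) ba)`). So the occurrences of `F (n+6) a` are those of
`F (n+6) ab = σ (F (n+5) a)`. The case `k = 8` is a direct computation.
-/

namespace List

variable {α : Type*}

theorem append_singleton_not_suffix {u l : List α} {x y : α} (hxy : x ≠ y)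
    (hu : [x, y] <:+ u) (hul : u <:+ l) (c : α) : ¬ u ++ [c] <:+ l := by
  intro h
  have hxy_l := hu.trans hul
  obtain ⟨s, rfl⟩ := hu
  have hyc : [y, c] <:+ l := (suffix_append (s ++ [x]) [y, c]).trans (by simpa using h)
  have := (suffix_of_suffix_length_le hxy_l hyc le_rfl).eq_of_length rfl
  simp_all

variable [DecidableEq α]

def occCount (u w : List α) : ℕ := w.tails.countP (u <+: ·)

theorem occCount_nil_right (u : List α) : occCount u [] = if u = [] then 1 else 0 := by
  simp [occCount]

theorem occCount_cons (u w : List α) (c : α) :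
    occCount u (c :: w) = occCount u w + if u <+: c :: w then 1 else 0 := by
  simp only [occCount, tails_cons, countP_cons, decide_eq_true_eq]

theorem occCount_eq_zero_iff {u w : List α} : occCount u w = 0 ↔ ¬ u <:+: w := by
  simp only [occCount, countP_eq_zero, mem_tails, decide_eq_true_eq, infix_iff_prefix_suffix,
    not_exists, not_and]
  exact forall_congr' fun _ => imp_not_comm

end List

open List

theorem occursAt_zero_iff (u w : Word) : occursAt u w 0 ↔ u <+: w := by
  simp only [occursAt, zero_add, drop_zero, eq_comm (a := take _ _), ← prefix_iff_eq_take]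
  exact and_iff_right_of_imp IsPrefix.length_le

theorem occursAt_succ_iff (u w : Word) (c : Bool) (i : ℕ) :
    occursAt u (c :: w) (i + 1) ↔ occursAt u w i := by
  simp only [occursAt, length_cons, drop_succ_cons, Nat.add_right_comm i 1,
    Nat.add_le_add_iff_right]

theorem card_filter_occursAt (u w : Word) :
    ((Finset.range (w.length + 1)).filter (fun i => occursAt u w i)).card = occCount u w := by
  induction w with
  | nil =>
    simp [Finset.range_one, Finset.filter_singleton, occursAt_zero_iff, occCount_nil_right,
      apply_ite Finset.card]
  | cons c w ih =>
    rw [Finset.card_filter, length_cons, Finset.sum_range_succ', occCount_cons]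
    simp only [occursAt_succ_iff, occursAt_zero_iff, ← Finset.card_filter, ih]

theorem ite_prefix_eq_ite_append_prefix_add (u t : Word) :
    (if u <+: t then 1 else 0) = (if u ++ [false] <+: t then 1 else 0) +
      (if u ++ [true] <+: t then 1 else 0) + (if u = t then 1 else 0) := by
  by_cases h : u <+: t
  · obtain ⟨r, rfl⟩ := h
    have hu : ∀ c, ¬ u ++ [c] <+: u := fun c hc => by simpa using hc.length_le
    rcases r with _ | ⟨_ | _, r⟩ <;> simp [hu]
  · have hc : ∀ c, ¬ u ++ [c] <+: t := fun c hc => h ((prefix_append _ _).trans hc)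
    have ht : u ≠ t := by rintro rfl; exact h (prefix_refl u)
    simp [h, hc, ht]

theorem occCount_eq_occCount_append_add (u w : Word) :
    occCount u w = occCount (u ++ [false]) w + occCount (u ++ [true]) w +
      if u <:+ w then 1 else 0 := by
  induction w with
  | nil => by_cases h : u = [] <;> simp [occCount_nil_right, h]
  | cons c w ih =>
    have hsuffix : (if u <:+ c :: w then 1 else 0) =
        (if u <:+ w then 1 else 0) + if u = c :: w then 1 else 0 := by
      by_cases h : u = c :: w
      · have hw : ¬ c :: w <:+ w := fun hs => by simpa using hs.length_le
        simp [h, hw]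
      · simp [suffix_cons_iff, h]
    simp only [occCount_cons, hsuffix, ih, ite_prefix_eq_ite_append_prefix_add u (c :: w)]
    omega

/-- The Fibonacci morphism `a ↦ ab`, `b ↦ a`. -/
def fibMorphism (w : Word) : Word := w.flatMap fun c => if c then [false] else [false, true]

@[simp] theorem fibMorphism_nil : fibMorphism [] = [] := rfl

@[simp] theorem fibMorphism_cons_false (w : Word) :
    fibMorphism (false :: w) = false :: true :: fibMorphism w := rfl

@[simp] theorem fibMorphism_cons_true (w : Word) :
    fibMorphism (true :: w) = false :: fibMorphism w := rfl

@[simp] theorem fibMorphism_append (x y : Word) :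
    fibMorphism (x ++ y) = fibMorphism x ++ fibMorphism y :=
  flatMap_append

@[simp] theorem true_cons_not_prefix_fibMorphism (x w : Word) :
    ¬ true :: x <+: fibMorphism w := by
  cases w with
  | nil => simp
  | cons c w => cases c <;> simp

theorem exists_fibMorphism_eq_false_cons {w : Word} (hw : w ≠ []) :
    ∃ r, fibMorphism w = false :: r := by
  obtain ⟨c, w, rfl⟩ := exists_cons_of_ne_nil hw
  cases c <;> simp

theorem prefix_of_fibMorphism_prefix :
    ∀ {v w : Word}, fibMorphism (v ++ [false]) <+: fibMorphism w → v ++ [false] <+: w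
  | _, [], h => by simpa using h.length_le
  | [], false :: _, _ => by simp
  | [], true :: _, h => by simp at h
  | false :: _, true :: _, h => by simp at h
  | true :: v, false :: w, h => by
    obtain ⟨r, hr⟩ := exists_fibMorphism_eq_false_cons (w := v ++ [false]) (by simp)
    simp [hr] at h
  | false :: _, false :: _, h => by
    simpa using prefix_of_fibMorphism_prefix (by simpa using h)
  | true :: _, true :: _, h => by
    simpa using prefix_of_fibMorphism_prefix (by simpa using h)

theorem fibMorphism_prefix_fibMorphism_iff {v w : Word} :
    fibMorphism (v ++ [false]) <+: fibMorphism w ↔ v ++ [false] <+: w :=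
  ⟨prefix_of_fibMorphism_prefix, fun ⟨r, hr⟩ => ⟨fibMorphism r, by simp [← hr]⟩⟩

theorem occCount_fibMorphism (v w : Word) :
    occCount (fibMorphism (v ++ [false])) (fibMorphism w) = occCount (v ++ [false]) w := by
  induction w with
  | nil => simp [occCount_nil_right]
  | cons c w ih =>
    have key := @fibMorphism_prefix_fibMorphism_iff v (c :: w)
    cases c
    · obtain ⟨r, hr⟩ := exists_fibMorphism_eq_false_cons (w := v ++ [false]) (by simp)
      rw [fibMorphism_cons_false] at key ⊢
      simp only [occCount_cons, ih, key]
      simp [hr]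
    · rw [fibMorphism_cons_true] at key ⊢
      simp only [occCount_cons, ih, key]

theorem infix_of_fibMorphism_infix {v w : Word}
    (h : fibMorphism (v ++ [false]) <:+: fibMorphism w) : v ++ [false] <:+: w := by
  rw [← occCount_eq_zero_iff.not_left, occCount_fibMorphism] at h
  simpa [occCount_eq_zero_iff] using h

theorem bb_not_infix_fibMorphism (w : Word) : ¬ [true, true] <:+: fibMorphism w := by
  induction w with
  | nil => simp
  | cons c w ih => cases c <;> simp [infix_cons_iff, ih]

theorem aaa_not_infix_fibMorphism :
    ∀ {w : Word}, ¬ [true, true] <:+: w → ¬ [false, false, false] <:+: fibMorphism w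
  | [], _ => by simp
  | false :: w, h => by
    simpa [infix_cons_iff] using aaa_not_infix_fibMorphism fun hw => h (infix_cons hw)
  | [true], _ => by simp [infix_cons_iff]
  | true :: false :: w, h => by
    simpa [infix_cons_iff] using
      aaa_not_infix_fibMorphism (w := false :: w) fun hw => h (infix_cons hw)
  | true :: true :: _, h => absurd (prefix_append [true, true] _).isInfix h

theorem fibMorphism_F : ∀ n, fibMorphism (F (n + 1)) = F (n + 2)
  | 0 => rfl
  | 1 => rfl
  | n + 2 => by
    show fibMorphism (F (n + 2) ++ F (n + 1)) = F (n + 3) ++ F (n + 2)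
    rw [fibMorphism_append, fibMorphism_F (n + 1), fibMorphism_F n]

theorem F_suffix_F_add_two (m : ℕ) : F (m + 1) <:+ F (m + 3) := suffix_append _ _

theorem F_infix_F_add_two : ∀ k, F k <:+: F (k + 2)
  | 0 => nil_infix
  | k + 1 => (F_suffix_F_add_two k).isInfix

theorem F_infix_fibMorphism_F (k : ℕ) : F k <:+: fibMorphism (F (k + 1)) :=
  fibMorphism_F k ▸ F_infix_F_add_two k

theorem bb_not_infix_F (k : ℕ) : ¬ [true, true] <:+: F k :=
  fun h => bb_not_infix_fibMorphism _ (h.trans (F_infix_fibMorphism_F k))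

theorem aaa_not_infix_F (k : ℕ) : ¬ [false, false, false] <:+: F k :=
  fun h => aaa_not_infix_fibMorphism (bb_not_infix_F (k + 1)) (h.trans (F_infix_fibMorphism_F k))

theorem F_suffix_F_add_two_mul (m : ℕ) : ∀ j, F (m + 1) <:+ F (m + 2 * j + 1)
  | 0 => suffix_refl _
  | j + 1 => (F_suffix_F_add_two_mul m j).trans (F_suffix_F_add_two (m + 2 * j))

theorem ab_suffix_F (j : ℕ) : [false, true] <:+ F (2 * j + 3) := by
  rw [show 2 * j + 3 = 2 + 2 * j + 1 by ring]
  exact F_suffix_F_add_two_mul 2 j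

theorem ba_suffix_F (j : ℕ) : [true, false] <:+ F (2 * j + 4) := by
  rw [show 2 * j + 4 = 3 + 2 * j + 1 by ring]
  exact (suffix_cons false _).trans (F_suffix_F_add_two_mul 3 j)

theorem exists_pair_suffix_F (m : ℕ) : ∃ x, [x, !x] <:+ F (m + 3) := by
  obtain ⟨j, rfl | rfl⟩ := Nat.even_or_odd' m
  exacts [⟨false, ab_suffix_F j⟩, ⟨true, ba_suffix_F j⟩]

theorem F_append_not_suffix (n : ℕ) (c : Bool) : ¬ F (n + 3) ++ [c] <:+ F (n + 7) := by
  obtain ⟨x, hx⟩ := exists_pair_suffix_F n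
  exact append_singleton_not_suffix (by cases x <;> decide) hx
    ((F_suffix_F_add_two (n + 2)).trans (F_suffix_F_add_two (n + 4))) c

theorem append_false_false_not_suffix_F (n : ℕ) (u : Word) :
    ¬ u ++ [false, false] <:+ F (n + 3) := by
  intro h
  obtain ⟨x, hx⟩ := exists_pair_suffix_F n
  have := (suffix_of_suffix_length_le hx ((suffix_append u _).trans h) le_rfl).eq_of_length rfl
  cases x <;> simp at this

theorem F_append_true_not_infix (n k : ℕ) : ¬ F (n + 5) ++ [true] <:+: F k := by
  obtain ⟨j, rfl | rfl⟩ := Nat.even_or_odd' n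
  · obtain ⟨s, hs⟩ : [false, true] <:+ F (2 * j + 5) := ab_suffix_F (j + 1)
    intro h
    refine bb_not_infix_F k (IsInfix.trans ?_ h)
    rw [← hs]
    exact (suffix_append (s ++ [false]) [true, true]).isInfix.trans (by simp)
  · obtain ⟨s, hs⟩ := ba_suffix_F j
    have hF : F (2 * j + 1 + 5) ++ [true] =
        fibMorphism ((fibMorphism s ++ [false, false]) ++ [false]) := by
      rw [← fibMorphism_F, ← fibMorphism_F, ← hs]
      simp
    intro h
    rw [hF] at h
    have := infix_of_fibMorphism_infix (h.trans (F_infix_fibMorphism_F k))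
    exact aaa_not_infix_F (k + 1)
      ((suffix_append (fibMorphism s) _).isInfix.trans (by simpa using this))

theorem occCount_F_append_false : ∀ n, occCount (F (n + 5) ++ [false]) (F (n + 9)) = 7
  | 0 => by decide
  | n + 1 => by
    have hab : occCount (F (n + 6) ++ [false, true]) (F (n + 10)) = 7 := by
      rw [← occCount_F_append_false n, ← occCount_fibMorphism, fibMorphism_append,
        fibMorphism_F, fibMorphism_F]
      rfl
    have haab : occCount (F (n + 6) ++ [false, false, true]) (F (n + 10)) = 0 := by
      have hσ : F (n + 6) ++ [false, false, true] =
          fibMorphism ((F (n + 5) ++ [true]) ++ [false]) := by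
        simp [fibMorphism_F]
      rw [hσ, ← fibMorphism_F (n + 8), occCount_fibMorphism, occCount_eq_zero_iff]
      exact fun h => F_append_true_not_infix n (n + 9) ((prefix_append _ _).isInfix.trans h)
    have haaa : occCount (F (n + 6) ++ [false, false, false]) (F (n + 10)) = 0 :=
      occCount_eq_zero_iff.2 fun h => aaa_not_infix_F _ ((suffix_append _ _).isInfix.trans h)
    have haa : occCount (F (n + 6) ++ [false, false]) (F (n + 10)) = 0 := by
      rw [occCount_eq_occCount_append_add,
        if_neg (append_false_false_not_suffix_F (n + 7) _)]
      simp [haaa, haab]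
    rw [occCount_eq_occCount_append_add, if_neg (F_append_not_suffix (n + 3) false)]
    simp [haa, hab]

/-- For `k ≥ 8`, `F (k-4)` occurs exactly eight times in `F k`. -/
theorem stmt5 (k : ℕ) (hk : 8 ≤ k) :
    ((Finset.range ((F k).length + 1)).filter (fun i => occursAt (F (k - 4)) (F k) i)).card
      = 8 := by
  rw [card_filter_occursAt]
  rcases hk.eq_or_lt with rfl | hlt
  · decide
  obtain ⟨n, rfl⟩ := Nat.exists_eq_add_of_le' hlt
  show occCount (F (n + 5)) (F (n + 9)) = 8
  have hsuffix : F (n + 5) <:+ F (n + 9) :=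
    (F_suffix_F_add_two (n + 4)).trans (F_suffix_F_add_two (n + 6))
  rw [occCount_eq_occCount_append_add, occCount_F_append_false,
    occCount_eq_zero_iff.2 (F_append_true_not_infix n _), if_pos hsuffix]
end

section
/- If x is a Lyndon word over {a,b} (with order a < b), then φ(x) is also a Lyndon word, where φ(a) = aab, φ(b) = ab. -/
/-! Every proper suffix of `φ x` is `φ s`, `b φ s` or `ab φ s`, where `s` (resp. `a s`) is a
suffix of `x`. Since `φ` is strictly monotone for the lexicographic order, the first kind is larger
than `φ x` because `x` is Lyndon. `φ x` begins with `a`, which beats `b φ s`; and a Lyndon word in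
which `a` occurs begins with `a`, so in the last case `φ x` begins with `aa`, which beats `ab`. -/

lemma phi_cons (c : Bool) (t : Word) :
    phi (c :: t) = (if c then [false, true] else [false, false, true]) ++ phi t := rfl

lemma wlt_phi_phi {x y : Word} (h : wlt x y) : wlt (phi x) (phi y) := by
  induction h with
  | @nil a _ => cases a <;> exact .nil
  | @rel a _ b _ hab =>
    obtain ⟨rfl, rfl⟩ : a = false ∧ b = true := by revert a b; decide
    exact .cons (.rel (by decide))
  | @cons a _ _ _ ih =>
    cases a
    · exact .cons (.cons (.cons ih))
    · exact .cons (.cons ih)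

lemma List.suffix_append_cases {α : Type*} {s u v : List α} (h : s <:+ u ++ v) :
    s <:+ v ∨ ∃ u', u' <:+ u ∧ s = u' ++ v := by
  obtain ⟨p, hp⟩ := h
  rcases List.append_eq_append_iff.mp hp with ⟨u', hu, hs⟩ | ⟨v', _, hv⟩
  · exact .inr ⟨u', ⟨p, hu.symm⟩, hs⟩
  · exact .inl ⟨v', hv.symm⟩

lemma suffix_phi_cases {x s : Word} (hs : s <:+ phi x) :
    (∃ s', s' <:+ x ∧ s = phi s') ∨ (∃ s', s = true :: phi s') ∨
      (∃ s', false :: s' <:+ x ∧ s = false :: true :: phi s') := by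
  induction x generalizing s with
  | nil => exact .inl ⟨[], List.nil_suffix, List.suffix_nil.mp hs⟩
  | cons c t ih =>
    rw [phi_cons] at hs
    rcases List.suffix_append_cases hs with hs | ⟨u, hu, rfl⟩
    · rcases ih hs with ⟨s', hs', rfl⟩ | hb | ⟨s', hs', rfl⟩
      · exact .inl ⟨s', hs'.trans (List.suffix_cons c t), rfl⟩
      · exact .inr (.inl hb)
      · exact .inr (.inr ⟨s', hs'.trans (List.suffix_cons c t), rfl⟩)
    · rw [← List.mem_tails] at hu
      cases c <;> simp only [Bool.false_eq_true, if_true, if_false, List.tails,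
        List.mem_cons, List.not_mem_nil, or_false] at hu
      · rcases hu with rfl | rfl | rfl | rfl
        · exact .inl ⟨false :: t, List.suffix_refl _, rfl⟩
        · exact .inr (.inr ⟨t, List.suffix_refl _, rfl⟩)
        · exact .inr (.inl ⟨t, rfl⟩)
        · exact .inl ⟨t, List.suffix_cons _ t, rfl⟩
      · rcases hu with rfl | rfl | rfl
        · exact .inl ⟨true :: t, List.suffix_refl _, rfl⟩
        · exact .inr (.inl ⟨t, rfl⟩)
        · exact .inl ⟨t, List.suffix_cons _ t, rfl⟩

lemma IsLyndon.exists_eq_false_cons {x s : Word} (hx : IsLyndon x) (hs : false :: s <:+ x) :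
    ∃ t, x = false :: t := by
  obtain ⟨c, t, rfl⟩ := List.exists_cons_of_ne_nil (hs.ne_nil (List.cons_ne_nil _ _))
  cases c
  · exact ⟨t, rfl⟩
  · cases hx _ hs (List.cons_ne_nil _ _) (by simp) with
    | rel h => exact absurd h (by decide)

/-- `φ` maps Lyndon words to Lyndon words. -/
theorem stmt8 (x : Word) (h : IsLyndon x) : IsLyndon (phi x) := by
  intro s hs hne hnex
  rcases suffix_phi_cases hs with ⟨s', hs', rfl⟩ | ⟨s', rfl⟩ | ⟨s', hs', rfl⟩
  · exact wlt_phi_phi (h s' hs' (by rintro rfl; exact hne rfl) (by rintro rfl; exact hnex rfl))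
  · cases x with
    | nil => exact absurd (List.suffix_nil.mp hs) (List.cons_ne_nil _ _)
    | cons c t => cases c <;> exact .rel (by decide)
  · obtain ⟨t, rfl⟩ := h.exists_eq_false_cons hs'
    exact .cons (.rel (by decide))
end

section
/- If the Lyndon factorization of a binary string w is λ_1^{p_1}, …, λ_m^{p_m}, then the Lyndon factorization of φ(w) is φ(λ_1)^{p_1}, …, φ(λ_m)^{p_m}, where φ(a) = aab, φ(b) = ab. -/
/-!
`wlt` is the order `<` on `List Bool`, and `φ` is strictly monotone for it, so the factors stay
non-increasing. A nonempty suffix of `φ(w)` is `φ(t)`, `b φ(t)` or `ab φ(t)`, where `t`, or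
`a t` in the last case, is a suffix of `w`. When `w` is Lyndon each of these exceeds `φ(w)`:
the first by monotonicity, the second because `φ(w)` starts with `a`, and the third because
`φ(w) ≤ φ(a t) = aab φ(t) < ab φ(t)`.
-/

@[simp]
lemma phi_nil : phi [] = [] := rfl

@[simp]
lemma phi_cons_false (u : Word) : phi (false :: u) = false :: false :: true :: phi u := by
  simp [phi]

@[simp]
lemma phi_cons_true (u : Word) : phi (true :: u) = false :: true :: phi u := by
  simp [phi]

lemma phi_flatten (fs : List Word) : phi fs.flatten = (fs.map phi).flatten := by
  induction fs with
  | nil => rfl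
  | cons x fs ih => simp only [List.flatten_cons, List.map_cons, ← ih, phi, List.flatMap_append]

lemma exists_phi_eq_false_cons {w : Word} (hw : w ≠ []) : ∃ r, phi w = false :: r := by
  obtain ⟨_ | _, w, rfl⟩ := List.exists_cons_of_ne_nil hw <;> simp

lemma phi_ne_nil {w : Word} (hw : w ≠ []) : phi w ≠ [] := by
  obtain ⟨r, hr⟩ := exists_phi_eq_false_cons hw
  simp [hr]

lemma strictMono_phi : StrictMono phi := by
  intro x y (h : List.Lex (· < ·) x y)
  induction h with
  | nil => exact (exists_phi_eq_false_cons (List.cons_ne_nil _ _)).elim fun _ hr => hr ▸ .nil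
  | @rel a _ b _ hab =>
    obtain ⟨rfl, rfl⟩ : a = false ∧ b = true := by revert a b; decide
    exact .cons (.rel (by decide))
  | @cons a _ _ _ ih =>
    cases a
    · exact List.Lex.append_left _ ih [false, false, true]
    · exact List.Lex.append_left _ ih [false, true]

lemma suffix_phi {s w : Word} (hs : s <:+ phi w) :
    (∃ t, t <:+ w ∧ s = phi t) ∨
    (∃ t, t <:+ w ∧ s = true :: phi t) ∨
    (∃ t, false :: t <:+ w ∧ s = false :: true :: phi t) := by
  induction w with
  | nil => exact .inl ⟨[], List.nil_suffix, by simpa using hs⟩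
  | cons c w ih =>
    have hw : w <:+ c :: w := List.suffix_cons c w
    by_cases hs' : s <:+ phi w
    · rcases ih hs' with ⟨t, ht, rfl⟩ | ⟨t, ht, rfl⟩ | ⟨t, ht, rfl⟩
      exacts [.inl ⟨t, ht.trans hw, rfl⟩, .inr (.inl ⟨t, ht.trans hw, rfl⟩),
        .inr (.inr ⟨t, ht.trans hw, rfl⟩)]
    cases c <;> simp only [phi_cons_false, phi_cons_true, List.suffix_cons_iff, hs', or_false] at hs
    · rcases hs with rfl | rfl | rfl
      · exact .inl ⟨_, List.suffix_refl _, (phi_cons_false w).symm⟩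
      · exact .inr (.inr ⟨w, List.suffix_refl _, rfl⟩)
      · exact .inr (.inl ⟨w, hw, rfl⟩)
    · rcases hs with rfl | rfl
      · exact .inl ⟨_, List.suffix_refl _, (phi_cons_true w).symm⟩
      · exact .inr (.inl ⟨w, hw, rfl⟩)

lemma isLyndon_phi {w : Word} (hL : IsLyndon w) (hw : w ≠ []) : IsLyndon (phi w) := by
  intro s hs hs_ne hs_ne_w
  show phi w < s
  rcases suffix_phi hs with ⟨t, ht, rfl⟩ | ⟨t, -, rfl⟩ | ⟨t, ht, rfl⟩
  · have ht_ne : t ≠ [] := by rintro rfl; exact hs_ne rfl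
    have ht_ne_w : t ≠ w := by rintro rfl; exact hs_ne_w rfl
    exact strictMono_phi (hL t ht ht_ne ht_ne_w)
  · obtain ⟨r, hr⟩ := exists_phi_eq_false_cons hw
    exact hr ▸ .rel (by decide)
  · have hlt : phi (false :: t) < false :: true :: phi t := .cons (.rel (by decide))
    by_cases heq : false :: t = w
    · exact heq ▸ hlt
    · exact (strictMono_phi (hL _ ht (List.cons_ne_nil _ _) heq)).trans hlt

/-- If `fs` is the Lyndon factorization of `w`, then `fs.map phi` is the
Lyndon factorization of `φ(w)`. -/
theorem stmt9 (w : Word) (fs : List Word) (h : IsLyndonFactorization w fs) :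
    IsLyndonFactorization (phi w) (fs.map phi) := by
  obtain ⟨rfl, hlyndon, hchain⟩ := h
  refine ⟨(phi_flatten fs).symm, ?_, ?_⟩
  · intro y hy
    obtain ⟨x, hx, rfl⟩ := List.mem_map.mp hy
    obtain ⟨hx_lyndon, hx_ne⟩ := hlyndon x hx
    exact ⟨isLyndon_phi hx_lyndon hx_ne, phi_ne_nil hx_ne⟩
  · exact List.isChain_map_of_isChain phi (fun a b => (strictMono_phi.lt_iff_lt).not.mpr) hchain
end

section
/- For every i ≥ 1, the concatenation φ^{i-1}(a)·φ^{i-2}(a)⋯φ^0(a) is a prefix of φ^i(a), where φ(a) = aab, φ(b) = ab. -/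
lemma phi_append (x y : Word) : phi (x ++ y) = phi x ++ phi y := by
  simp [phi]

lemma phiIter_append (n : ℕ) (x y : Word) :
    phi^[n] (x ++ y) = phi^[n] x ++ phi^[n] y := by
  induction n generalizing x y with
  | zero => rfl
  | succ n ih => rw [Function.iterate_succ_apply, Function.iterate_succ_apply,
      Function.iterate_succ_apply, phi_append, ih]

/-- For `i ≥ 1`, `φ^(i-1)(a) ⋯ φ^0(a)` is a prefix of `φ^i(a)`. -/
theorem stmt14 (i : ℕ) (hi : 1 ≤ i) :
    ((List.range i).reverse.map (fun j => phi^[j] [false])).flatten <+: phi^[i] [false] := by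
  induction i with
  | zero => omega
  | succ n ih =>
    rcases Nat.eq_zero_or_pos n with h | h
    · subst h; decide
    · have key : phi^[n+1] [false]
          = phi^[n] [false] ++ (phi^[n] [false] ++ phi^[n] [true]) := by
        rw [Function.iterate_succ_apply]
        show phi^[n] ([false] ++ ([false] ++ [true])) = _
        rw [phiIter_append, phiIter_append]
      rw [List.range_succ, List.reverse_append, List.reverse_singleton,
        List.singleton_append, List.map_cons, List.flatten_cons, key]
      simpa using (ih h).trans (List.prefix_append _ _)
end

section
/- Let T_{2k} be F_{2k} with its last b substituted by a (i.e., T_{2k} = F''_{2k}·aa). For k ≥ 6, the lexicographically largest suffix of T_{2k} (with a < b) is the suffix starting at position f_{2k-3}. -/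
/-!
Put `G n = F (2n+2) · F (2n+3)`. Every suffix of `G n` except its final letter `b` is
`≪ b · G n`: smaller, with the first mismatch inside both words. This passes from `G n` to
`G (n+1) = F (2n+3) · G n · G n`, because `b · G n ≪ b · G (n+1)`: the words
`F (2n+2) · F (2n+3)` and `F (2n+3) · F (2n+2)` differ only in their last two letters, `ab`
against `ba`. Finally `T (2n+6) = F (2n+3) · G n · G' n`, where `G' n` is `G n` with its final `b`
replaced by `a`, so no suffix of `T (2n+6)` exceeds the one, `b · G n · G' n`, that starts at the
last letter of `F (2n+3)`.
-/
/-- The relation `x ≪ y` of Lyndon-word theory: `x < y`, with the first mismatch inside both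
words. -/
def LexBelow (x y : Word) : Prop := ∀ u v : Word, wlt (x ++ u) (y ++ v)

infix:50 " ≪ " => LexBelow

namespace LexBelow

variable {x y z : Word}

theorem trans (hxy : x ≪ y) (hyz : y ≪ z) : x ≪ z := fun u w =>
  List.lex_trans (fun h₁ h₂ => lt_trans h₁ h₂) (hxy u []) (hyz [] w)

theorem append_left (c : Word) (h : x ≪ y) : c ++ x ≪ c ++ y := fun u v => by
  rw [List.append_assoc, List.append_assoc]
  exact List.Lex.append_left _ (h u v) c

theorem append_right (h : x ≪ y) (u : Word) : x ++ u ≪ y := fun u' v => by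
  simpa only [List.append_assoc] using h (u ++ u') v

theorem of_mismatch (c x y : Word) : c ++ false :: x ≪ c ++ true :: y :=
  append_left c fun _ _ => List.Lex.rel (by decide)

end LexBelow

def SuffixesLexBelow (G : Word) : Prop := ∀ i, i + 1 < G.length → G.drop i ≪ true :: G

namespace SuffixesLexBelow

variable {H W : Word}

theorem drop_append_self (hG : SuffixesLexBelow (H ++ [true])) (hW : true :: (H ++ [true]) ≪ W)
    {i : ℕ} (hi : i ≤ H.length) : (H ++ [true]).drop i ++ (H ++ [true]) ≪ W := by
  rcases hi.lt_or_eq with hi | rfl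
  · exact ((hG i (by simpa using hi)).append_right _).trans hW
  · simpa using hW

theorem drop_append_append (hG : SuffixesLexBelow (H ++ [true])) (m : ℕ)
    (hW : true :: (H ++ [true]) ≪
      true :: ((H ++ [true]).drop m ++ (H ++ [true]) ++ (H ++ [true]))) :
    SuffixesLexBelow ((H ++ [true]).drop m ++ (H ++ [true]) ++ (H ++ [true])) := by
  set G := H ++ [true] with hG_def
  have hGlen : G.length = H.length + 1 := by simp [hG_def]
  intro j hj
  rw [List.append_assoc] at hj hW ⊢
  rcases lt_or_ge j (G.drop m).length with hj₁ | hj₁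
  · rw [List.drop_append_of_le_length hj₁.le, List.drop_drop, ← List.append_assoc]
    refine (hG.drop_append_self hW ?_).append_right _
    rw [List.length_drop] at hj₁
    omega
  obtain ⟨i, rfl⟩ := Nat.exists_eq_add_of_le hj₁
  rw [List.drop_length_add_append]
  rcases lt_or_ge i G.length with hi | hi
  · rw [List.drop_append_of_le_length hi.le]
    exact hG.drop_append_self hW (by omega)
  obtain ⟨i, rfl⟩ := Nat.exists_eq_add_of_le hi
  rw [List.drop_length_add_append]
  refine (hG i ?_).trans hW
  simp only [List.length_append] at hj
  omega

theorem drop_append_false (hG : SuffixesLexBelow (H ++ [true])) {i : ℕ} (hi : i ≤ H.length) :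
    H.drop i ++ [false] ≪ true :: (H ++ [true]) := by
  rcases hi.lt_or_eq with hi | rfl
  · refine (LexBelow.of_mismatch (H.drop i) [] []).trans ?_
    simpa [List.drop_append_of_le_length hi.le] using hG i (by simpa using hi)
  · simpa using LexBelow.of_mismatch [] [] (H ++ [true])

theorem drop_eq_or_wlt_drop (hG : SuffixesLexBelow (H ++ [true])) {m : ℕ} (hm : m ≤ H.length)
    {T : Word} (hT : T = (H ++ [true]).drop m ++ (H ++ [true]) ++ (H ++ [false])) :
    ∀ j < T.length, T.drop j = T.drop (H.length - m) ∨ wlt (T.drop j) (T.drop (H.length - m)) := by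
  set G := H ++ [true] with hG_def
  have hGlen : G.length = H.length + 1 := by simp [hG_def]
  have hXlen : (G.drop m).length = H.length - m + 1 := by rw [List.length_drop]; omega
  rw [List.append_assoc] at hT
  subst hT
  have hmax : (G.drop m ++ (G ++ (H ++ [false]))).drop (H.length - m)
      = (true :: G) ++ (H ++ [false]) := by
    rw [List.drop_append_of_le_length (by omega), List.drop_drop, hG_def,
      List.drop_append_of_le_length (by omega), show m + (H.length - m) = H.length by omega]
    simp
  intro j hj
  rw [hmax]
  rcases lt_trichotomy j (H.length - m) with hj₁ | rfl | hj₁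
  · right
    rw [List.drop_append_of_le_length (by omega), List.drop_drop, List.append_assoc]
    exact (hG (m + j) (by omega)) _ _
  · left
    exact hmax
  right
  obtain ⟨i, rfl⟩ : ∃ i, j = (G.drop m).length + i := ⟨j - (G.drop m).length, by omega⟩
  rw [List.drop_length_add_append]
  rcases lt_trichotomy i H.length with hi | rfl | hi
  · rw [List.drop_append_of_le_length (by omega)]
    exact (hG i (by omega)) _ _
  · rw [List.drop_append_of_le_length (by omega), hG_def, List.drop_append_of_le_length le_rfl]
    simpa using (LexBelow.of_mismatch (true :: H) [] []) [] (H ++ [false])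
  · obtain ⟨i, rfl⟩ : ∃ i', i = G.length + i' := ⟨i - G.length, by omega⟩
    simp only [List.length_append, List.length_cons, List.length_nil] at hj
    rw [List.drop_length_add_append, List.drop_append_of_le_length (by omega)]
    simpa [hG_def] using (hG.drop_append_false (i := i) (by omega)) [] (H ++ [false])

end SuffixesLexBelow

theorem F_length (n : ℕ) : (F n).length = f n := by
  induction n using F.induct <;> simp_all [F, f]

theorem f_pos (n : ℕ) : 0 < f (n + 1) := by
  induction n with
  | zero => decide
  | succ n ih => simp only [f]; omega

theorem F_pair_succ (n : ℕ) : F (2 * n + 4) ++ F (2 * n + 5)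
    = F (2 * n + 3) ++ (F (2 * n + 2) ++ F (2 * n + 3)) ++ (F (2 * n + 2) ++ F (2 * n + 3)) := by
  simp [F]

theorem F_odd_eq_drop (n : ℕ) :
    F (2 * n + 3) = (F (2 * n + 2) ++ F (2 * n + 3)).drop (f (2 * n + 2)) :=
  (List.drop_left' (F_length _)).symm

theorem exists_F_swap (n : ℕ) : ∃ C : Word, F (2 * n + 2) ++ F (2 * n + 3) = C ++ [false, true] ∧
    F (2 * n + 3) ++ F (2 * n + 2) = C ++ [true, false] := by
  induction n with
  | zero => exact ⟨[false], rfl, rfl⟩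
  | succ n ih =>
    obtain ⟨C, hC, hC'⟩ := ih
    refine ⟨F (2 * n + 4) ++ F (2 * n + 3) ++ C, ?_, ?_⟩
    · calc F (2 * n + 4) ++ F (2 * n + 5)
          _ = F (2 * n + 4) ++ F (2 * n + 3) ++ (F (2 * n + 2) ++ F (2 * n + 3)) := by simp [F]
          _ = _ := by rw [hC]; simp only [List.append_assoc]
    · calc F (2 * n + 5) ++ F (2 * n + 4)
          _ = F (2 * n + 4) ++ F (2 * n + 3) ++ (F (2 * n + 3) ++ F (2 * n + 2)) := by simp [F]
          _ = _ := by rw [hC']; simp only [List.append_assoc]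

theorem suffixesLexBelow_F_pair (n : ℕ) : SuffixesLexBelow (F (2 * n + 2) ++ F (2 * n + 3)) := by
  induction n with
  | zero =>
    intro i hi
    replace hi : i < 2 := by
      have h3 : (F (2 * 0 + 2) ++ F (2 * 0 + 3)).length = 3 := rfl
      omega
    interval_cases i
    · exact LexBelow.of_mismatch [] [false, true] _
    · exact LexBelow.of_mismatch [] [true] _
  | succ n ih =>
    obtain ⟨C, hC, hC'⟩ := exists_F_swap n
    have hbelow :
        true :: (F (2 * n + 2) ++ F (2 * n + 3)) ≪ true :: (F (2 * n + 4) ++ F (2 * n + 5)) := by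
      have h4 : F (2 * n + 4) = C ++ [true, false] := hC'
      rw [hC, h4]
      simpa using LexBelow.of_mismatch (true :: C) [true] (false :: F (2 * n + 5))
    rw [show C ++ [false, true] = C ++ [false] ++ [true] by simp] at hC
    show SuffixesLexBelow (F (2 * n + 4) ++ F (2 * n + 5))
    rw [hC] at ih
    rw [F_pair_succ, hC, F_odd_eq_drop, hC] at hbelow ⊢
    exact ih.drop_append_append _ hbelow

theorem exists_dropLast_dropLast_F_eq (n : ℕ) :
    ∃ H : Word, F (2 * n + 2) ++ F (2 * n + 3) = H ++ [true] ∧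
    (F (2 * n + 6)).dropLast.dropLast ++ [false, false]
      = (H ++ [true]).drop (f (2 * n + 2)) ++ (H ++ [true]) ++ (H ++ [false]) := by
  obtain ⟨C, hC, hC'⟩ := exists_F_swap n
  refine ⟨C ++ [false], by simpa using hC, ?_⟩
  have h6 : F (2 * n + 6)
      = F (2 * n + 3) ++ (F (2 * n + 2) ++ F (2 * n + 3)) ++ (F (2 * n + 3) ++ F (2 * n + 2)) := by
    simp [F]
  rw [h6, hC', hC, F_odd_eq_drop, hC,
    show ∀ X : Word, X ++ (C ++ [true, false]) = X ++ C ++ [true] ++ [false] by simp,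
    List.dropLast_concat, List.dropLast_concat]
  simp

/-- For `k ≥ 6`, the lexicographically largest suffix of
`T (2k) = F'' (2k) ++ aa` starts at (1-indexed) position `f (2k−3)`. -/
theorem stmt17 (k : ℕ) (hk : 6 ≤ k) :
    let T : Word := (F (2 * k)).dropLast.dropLast ++ [false, false]
    let p : ℕ := f (2 * k - 3) - 1
    ∀ j < T.length, T.drop j = T.drop p ∨ wlt (T.drop j) (T.drop p) := by
  intro T p
  obtain ⟨n, rfl⟩ : ∃ n, k = n + 3 := ⟨k - 3, by omega⟩
  obtain ⟨H, hH, hT⟩ := exists_dropLast_dropLast_F_eq n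
  have hlen : H.length + 1 = f (2 * n + 2) + f (2 * n + 3) := by
    simpa [F_length] using congrArg List.length hH.symm
  have hpos : 0 < f (2 * n + 3) := f_pos _
  have hp : p = H.length - f (2 * n + 2) := by
    show f (2 * (n + 3) - 3) - 1 = _
    rw [show 2 * (n + 3) - 3 = 2 * n + 3 by omega]
    omega
  rw [hp]
  exact (hH ▸ suffixesLexBelow_F_pair n).drop_eq_or_wlt_drop (by omega) hT
end

section
/- For odd k ≥ 7 and every even i with 4 ≤ i ≤ k−3, both F_{i+1} and G_{i+2} = F_i·F_{i+1} are suffixes of F_k, F_{i+1} is a prefix of G_{i+2}, and G_{i+2} = F_{i+1}·G_i. -/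
/-- For odd `k ≥ 7` and even `i` with `4 ≤ i ≤ k−3`, both `F (i+1)` and
`G (i+2) = F i ++ F (i+1)` are suffixes of `F k`, `F (i+1)` is a prefix of
`G (i+2)`, and `G (i+2) = F (i+1) ++ G i`. -/
theorem stmt18 (k i : ℕ) (hk : 7 ≤ k) (hkodd : Odd k) (hieven : Even i)
    (hi1 : 4 ≤ i) (hi2 : i ≤ k - 3) :
    (F (i + 1) <:+ F k) ∧ ((F i ++ F (i + 1)) <:+ F k) ∧
      (F (i + 1) <+: (F i ++ F (i + 1))) ∧
      F i ++ F (i + 1) = F (i + 1) ++ (F (i - 2) ++ F (i - 1)) := by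
  obtain ⟨m, rfl⟩ : ∃ m, i = m + 4 := ⟨i - 4, by omega⟩
  obtain ⟨j, hj⟩ := hkodd
  obtain ⟨l, hl⟩ := hieven
  obtain ⟨d, rfl⟩ : ∃ d, k = m + 7 + 2 * d := ⟨j - l - 1, by omega⟩
  have h4 : F (m + 4) = F (m + 3) ++ F (m + 2) := rfl
  have h5 : F (m + 5) = F (m + 4) ++ F (m + 3) := rfl
  have h6 : F (m + 6) = F (m + 5) ++ F (m + 4) := rfl
  have h7 : F (m + 7) = F (m + 6) ++ F (m + 5) := rfl
  have hid : F (m + 4) ++ F (m + 5) = F (m + 5) ++ (F (m + 2) ++ F (m + 3)) := by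
    rw [h5, h4]; simp [List.append_assoc]
  have hG7 : (F (m + 4) ++ F (m + 5)) <:+ F (m + 7) := by
    refine ⟨F (m + 5), ?_⟩
    rw [h7, h6]; simp [List.append_assoc]
  have h7k : F (m + 7) <:+ F (m + 7 + 2 * d) := by
    have : ∀ d n, F (n + 1) <:+ F (n + 1 + 2 * d) := by
      intro d
      induction d with
      | zero => intro n; simp
      | succ d ih =>
        intro n
        have h1 : F (n + 1) <:+ F (n + 3) := ⟨F (n + 2), rfl⟩
        have h2 := ih (n + 2)
        have he : n + 2 + 1 + 2 * d = n + 1 + 2 * (d + 1) := by ring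
        exact List.IsSuffix.trans h1 (he ▸ h2)
    have := this d (m + 6)
    simpa using this
  have hGk : (F (m + 4) ++ F (m + 5)) <:+ F (m + 7 + 2 * d) := List.IsSuffix.trans hG7 h7k
  refine ⟨List.IsSuffix.trans ⟨F (m + 4), rfl⟩ hGk, hGk,
    ⟨F (m + 2) ++ F (m + 3), hid.symm⟩, ?_⟩
  simpa using hid
end
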